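/- arXiv:2404.03826 — 7 statements merged into one kernel-verified Lean document; each statement's English description precedes it below -/
import Mathlib

section
/- Let q be an odd prime, K a finite field with q elements, and L a finite field with q^2 elements that is an algebra over K. The assignment sending each unit c ∈ L^× with c^(q+1) = 1 to the K-linear automorphism of L given by v ↦ c·v is an injective group homomorphism, and its image is exactly the set of K-linear automorphisms f of L satisfying (f v)^(q+1) = v^(q+1) for all v ∈ L and having determinant 1 (as a K-linear endomorphism of L). -/
/-- The subgroup of `Lˣ` of elements `c` with `c^(q+1) = 1`. -/
def normOneSubgroup (q : ℕ) (L : Type*) [Field L] : Subgroup Lˣ where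
  carrier := {c : Lˣ | c ^ (q + 1) = 1}
  one_mem' := one_pow _
  mul_mem' := by
    intro a b ha hb
    simp only [Set.mem_setOf_eq] at *
    rw [mul_pow, ha, hb, one_mul]
  inv_mem' := by
    intro a ha
    simp only [Set.mem_setOf_eq] at *
    rw [inv_pow, ha, inv_one]

/-! Write `N x = x ^ (q + 1) = x * x ^ q`. Multiplication by `c` has determinant the norm of `c`,
which is `N c`, and scales `N` by `N c`. Conversely, if `f` preserves `N` and has determinant `1`,
then `g = (f 1)⁻¹ * f` fixes `1` and preserves `N`, hence, expanding `N (1 + x)`, also the trace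
`x + x ^ q`. So `g x` and `x` are roots of the same quadratic, `g x ∈ {x, x ^ q}` for every `x`, and
by linearity `g` is the identity or Frobenius. Frobenius has characteristic polynomial `X ^ 2 - 1`,
hence determinant `-1 ≠ 1`, so `g = id` and `f` is multiplication by `f 1`. -/

open Module Polynomial

theorem eq_or_eq_pow_of_add_pow_eq_of_pow_succ_eq {R : Type*} [CommRing R] [NoZeroDivisors R]
    {n : ℕ} {x y : R} (htr : y + y ^ n = x + x ^ n) (hN : y ^ (n + 1) = x ^ (n + 1)) :
    y = x ∨ y = x ^ n := by
  have h : (y - x) * (y - x ^ n) = 0 := by linear_combination y * htr - hN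
  rcases mul_eq_zero.mp h with h | h
  · exact .inl (sub_eq_zero.mp h)
  · exact .inr (sub_eq_zero.mp h)

theorem LinearMap.eq_or_eq_of_forall_apply_eq_or_eq {R M N : Type*} [Semiring R]
    [AddCommMonoid M] [AddCommGroup N] [Module R M] [Module R N] {f g h : M →ₗ[R] N}
    (hfgh : ∀ x, f x = g x ∨ f x = h x) : f = g ∨ f = h := by
  by_contra! hne
  obtain ⟨a, ha⟩ := not_forall.mp (mt LinearMap.ext hne.1)
  obtain ⟨b, hb⟩ := not_forall.mp (mt LinearMap.ext hne.2)
  have ha' := (hfgh a).resolve_left ha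
  have hb' := (hfgh b).resolve_right hb
  rcases hfgh (a + b) with hab | hab
  · exact ha (by simpa [ha', hb'] using hab)
  · exact hb (by simpa [ha', hb'] using hab)

namespace FiniteField

variable {K L : Type*} [Field K] [Fintype K] [Field L] [Algebra K L]

local notation "q" => Fintype.card K

theorem det_frobeniusAlgHom [Finite L] :
    LinearMap.det (frobeniusAlgHom K L).toLinearMap = (-1) ^ (finrank K L + 1) := by
  set σ := (frobeniusAlgHom K L).toLinearMap
  have hchar : σ.charpoly = X ^ finrank K L - 1 := by
    rw [← minpoly_frobeniusAlgHom K L]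
    refine eq_of_monic_of_dvd_of_natDegree_le (minpoly.monic (Algebra.IsIntegral.isIntegral σ))
      σ.charpoly_monic σ.minpoly_dvd_charpoly ?_
    rw [σ.charpoly_natDegree, minpoly_frobeniusAlgHom, ← C_1, natDegree_X_pow_sub_C]
  rw [LinearMap.det_eq_sign_charpoly_coeff, hchar]
  simp [finrank_pos.ne, pow_succ]

theorem algebraMap_norm_eq_pow_card_succ [Finite L] (hL : finrank K L = 2) (x : L) :
    algebraMap K L (Algebra.norm K x) = x ^ (q + 1) := by
  rw [algebraMap_norm_eq_pow_sum, hL, Nat.card_eq_fintype_card, Finset.sum_range_succ,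
    Finset.sum_range_one, pow_zero, pow_one, add_comm]

theorem one_add_pow_card_succ {R : Type*} [CommRing R] [Algebra K R] (x : R) :
    (1 + x) ^ (q + 1) = 1 + (x + x ^ q) + x ^ (q + 1) := by
  have h := map_add (frobeniusAlgHom K R) 1 x
  simp only [frobeniusAlgHom_apply, one_pow] at h
  rw [pow_succ, h]
  ring

theorem add_pow_card_apply_eq {g : L →ₗ[K] L} (h1 : g 1 = 1)
    (hN : ∀ v, g v ^ (q + 1) = v ^ (q + 1)) (x : L) :
    g x + g x ^ q = x + x ^ q := by
  have h := hN (1 + x)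
  rw [map_add, h1, one_add_pow_card_succ, one_add_pow_card_succ, hN] at h
  exact add_left_cancel (add_right_cancel h)

theorem eq_id_or_eq_frobeniusAlgHom {g : L →ₗ[K] L} (h1 : g 1 = 1)
    (hN : ∀ v, g v ^ (q + 1) = v ^ (q + 1)) :
    g = LinearMap.id ∨ g = (frobeniusAlgHom K L).toLinearMap :=
  LinearMap.eq_or_eq_of_forall_apply_eq_or_eq fun x ↦
    eq_or_eq_pow_of_add_pow_eq_of_pow_succ_eq (add_pow_card_apply_eq h1 hN x) (hN x)

theorem norm_eq_one_iff_pow_card_succ_eq_one [Finite L] (hL : finrank K L = 2) {x : L} :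
    Algebra.norm K x = 1 ↔ x ^ (q + 1) = 1 := by
  rw [← algebraMap_norm_eq_pow_card_succ hL, ← map_one (algebraMap K L),
    (algebraMap K L).injective.eq_iff]

theorem exists_eq_mulLeft_of_pow_card_succ_of_det_eq_one [Finite L] (hL : finrank K L = 2)
    (hK : ringChar K ≠ 2) {f : L →ₗ[K] L} (hN : ∀ v, f v ^ (q + 1) = v ^ (q + 1))
    (hdet : LinearMap.det f = 1) : ∃ c : Lˣ, c ^ (q + 1) = 1 ∧ f = LinearMap.mulLeft K (c : L) := by
  have hc : f 1 ^ (q + 1) = 1 := by simpa using hN 1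
  have hc0 : f 1 ≠ 0 := fun h ↦ by simp [h] at hc
  set g := LinearMap.mulLeft K (f 1)⁻¹ ∘ₗ f
  have hg1 : g 1 = 1 := inv_mul_cancel₀ hc0
  have hgN : ∀ v, g v ^ (q + 1) = v ^ (q + 1) := fun v ↦ by
    simp [g, mul_pow, hN]
  have hgdet : LinearMap.det g = 1 := by
    have : Algebra.norm K (f 1) = 1 := (norm_eq_one_iff_pow_card_succ_eq_one hL).mpr hc
    calc LinearMap.det g = Algebra.norm K (f 1)⁻¹ * Algebra.norm K (f 1) := by
          rw [LinearMap.det_comp, hdet, this]; rfl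
      _ = 1 := by rw [← map_mul, inv_mul_cancel₀ hc0, map_one]
  refine ⟨Units.mk0 _ hc0, Units.ext hc, ?_⟩
  rcases eq_id_or_eq_frobeniusAlgHom hg1 hgN with hid | hσ
  · ext v
    have := congr($hid v)
    simp only [g, LinearMap.comp_apply, LinearMap.mulLeft_apply, LinearMap.id_apply] at this
    exact ((eq_inv_mul_iff_mul_eq₀ hc0).mp this.symm).symm
  · rw [hσ, det_frobeniusAlgHom, hL] at hgdet
    exact absurd (by simpa [pow_succ] using hgdet) (Ring.neg_one_ne_one_of_char_ne_two hK)

end FiniteField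

open FiniteField in
theorem mulBy_norm_one_units_injective_range_general
    (q : ℕ) (hodd : Odd q)
    (L : Type*) [Field L] [Fintype L] (hL : Fintype.card L = q ^ 2)
    (K : Type*) [Field K] [Fintype K] (hK : Fintype.card K = q) [Algebra K L] :
    ∃ φ : normOneSubgroup q L →* (L ≃ₗ[K] L),
      (∀ (c : normOneSubgroup q L) (v : L), φ c v = ((c : Lˣ) : L) * v) ∧
      Function.Injective φ ∧
      (∀ f : L ≃ₗ[K] L, f ∈ φ.range ↔
        ((∀ v : L, (f v) ^ (q + 1) = v ^ (q + 1)) ∧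
          LinearMap.det (f : L →ₗ[K] L) = 1)) := by
  subst hK
  have hrank : finrank K L = 2 :=
    Nat.pow_right_injective Fintype.one_lt_card (card_eq_pow_finrank.symm.trans hL)
  have hchar : ringChar K ≠ 2 := fun h ↦ by
    have := even_card_iff_char_two.mp h
    rw [Nat.odd_iff] at hodd
    omega
  refine ⟨(DistribMulAction.toModuleAut K L).comp (normOneSubgroup _ L).subtype, fun _ _ ↦ rfl,
    fun c d h ↦ Subtype.ext (Units.ext (by simpa [Units.smul_def] using congr($h 1))), fun f ↦ ?_⟩
  constructor
  · rintro ⟨c, rfl⟩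
    have hc : ((c : Lˣ) : L) ^ (Fintype.card K + 1) = 1 := by
      rw [← Units.val_pow_eq_pow_val, c.2, Units.val_one]
    exact ⟨fun v ↦ by simp [Units.smul_def, mul_pow, hc],
      (norm_eq_one_iff_pow_card_succ_eq_one hrank).mpr hc⟩
  · rintro ⟨hN, hdet⟩
    obtain ⟨c, hc, hf⟩ := exists_eq_mulLeft_of_pow_card_succ_of_det_eq_one hrank hchar hN hdet
    exact ⟨⟨c, hc⟩, LinearEquiv.toLinearMap_injective hf.symm⟩

/-- For an odd prime `q`, the assignment sending each unit `c ∈ Lˣ` with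
`c^(q+1) = 1` to the `K`-linear automorphism `v ↦ c·v` is an injective group homomorphism
whose image is exactly the set of `K`-linear automorphisms `f` of `L` with
`(f v)^(q+1) = v^(q+1)` for all `v` and determinant `1`. -/
theorem mulBy_norm_one_units_injective_range
    (q : ℕ) (hq : q.Prime) (hodd : Odd q)
    (L : Type*) [Field L] [Fintype L] (hL : Fintype.card L = q ^ 2)
    (K : Type*) [Field K] [Fintype K] (hK : Fintype.card K = q) [Algebra K L] :
    ∃ φ : normOneSubgroup q L →* (L ≃ₗ[K] L),
      (∀ (c : normOneSubgroup q L) (v : L), φ c v = ((c : Lˣ) : L) * v) ∧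
      Function.Injective φ ∧
      (∀ f : L ≃ₗ[K] L, f ∈ φ.range ↔
        ((∀ v : L, (f v) ^ (q + 1) = v ^ (q + 1)) ∧
          LinearMap.det (f : L →ₗ[K] L) = 1)) :=
  mulBy_norm_one_units_injective_range_general q hodd L hL K hK
end

section
/- Let q be an odd prime, K a finite field with q elements, and L a finite field with q^2 elements that is an algebra over K. Every K-linear automorphism f of L satisfying (f v)^(q+1) = v^(q+1) for all v ∈ L is of exactly one of the two forms: f(v) = c·v for all v, or f(v) = c·v^q for all v, where c ∈ L^× is a (unique) element with c^(q+1) = 1. -/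
open Polynomial

private lemma aux_charP (q : ℕ) (hq : q.Prime)
    (L : Type*) [Field L] [Fintype L] (hL : Fintype.card L = q ^ 2) :
    CharP L q := by
  haveI : Fact q.Prime := ⟨hq⟩
  obtain ⟨n, hp, hcard⟩ := FiniteField.card L (ringChar L)
  have : ringChar L = q := by
    have hd : ringChar L ∣ q ^ 2 := by
      rw [hL] at hcard; exact hcard ▸ dvd_pow_self _ n.ne_zero
    exact ((Nat.prime_dvd_prime_iff_eq hp hq).mp (hp.dvd_of_dvd_pow hd))
  exact this ▸ ringChar.charP L

private lemma aux_exists (q : ℕ) (hq : q.Prime)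
    (L : Type*) [Field L] [Fintype L] (hL : Fintype.card L = q ^ 2) :
    ∃ v : L, v ^ q ≠ v := by
  by_contra h
  push_neg at h
  have hlt : (X ^ q - X : L[X]).natDegree < Fintype.card L := by
    have h1 : (X ^ q - X : L[X]).natDegree ≤ q :=
      le_trans (natDegree_sub_le _ _) (by simp [hq.one_lt.le])
    have : q < q ^ 2 := by nlinarith [hq.two_le]
    omega
  have hz : (X ^ q - X : L[X]) = 0 := by
    apply Polynomial.eq_zero_of_natDegree_lt_card_of_eval_eq_zero' _ Finset.univ
    · intro i _; simp [h i]
    · simpa [Finset.card_univ] using hlt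
  have := congrArg (fun p => Polynomial.coeff p q) hz
  simp only [coeff_sub, coeff_X_pow, coeff_X, if_pos rfl,
    if_neg hq.one_lt.ne, coeff_zero, sub_zero] at this
  exact one_ne_zero this

/-- For an odd prime `q`, every `K`-linear automorphism `f` of `L` with
`(f v)^(q+1) = v^(q+1)` for all `v` has exactly one of the two forms `v ↦ c·v` or
`v ↦ c·v^q`, for a unique `c ∈ Lˣ` with `c^(q+1) = 1`. -/
theorem norm_preserving_linearEquiv_eq_mul_or_mul_frobenius
    (q : ℕ) (hq : q.Prime) (hodd : Odd q)
    (L : Type*) [Field L] [Fintype L] (hL : Fintype.card L = q ^ 2)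
    (K : Type*) [Field K] [Fintype K] (hK : Fintype.card K = q) [Algebra K L]
    (f : L ≃ₗ[K] L) (hf : ∀ v : L, (f v) ^ (q + 1) = v ^ (q + 1)) :
    ∃! c : Lˣ, ((c : L) ^ (q + 1) = 1 ∧
      Xor' (∀ v : L, f v = (c : L) * v) (∀ v : L, f v = (c : L) * v ^ q)) := by
  haveI : Fact q.Prime := ⟨hq⟩
  haveI hchar : CharP L q := aux_charP q hq L hL
  have hpowL : ∀ x : L, x ^ (q ^ 2) = x := fun x => by
    have := FiniteField.pow_card x; rwa [hL] at this
  set c : L := f 1 with hc_def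
  have hc : c ^ (q + 1) = 1 := by simpa using hf 1
  have hc0 : c ≠ 0 := by
    intro h
    rw [h, zero_pow (Nat.succ_ne_zero q)] at hc
    exact zero_ne_one hc
  set g : L → L := fun v => c⁻¹ * f v with hg_def
  have hg1 : g 1 = 1 := inv_mul_cancel₀ hc0
  have gadd : ∀ x y : L, g (x + y) = g x + g y := fun x y => by
    simp only [hg_def, map_add, mul_add]
  have hgN : ∀ v : L, (g v) ^ (q + 1) = v ^ (q + 1) := by
    intro v
    have h1 : (c⁻¹) ^ (q + 1) = 1 := by rw [inv_pow, hc, inv_one]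
    calc (c⁻¹ * f v) ^ (q + 1) = (c⁻¹) ^ (q + 1) * (f v) ^ (q + 1) := mul_pow _ _ _
      _ = v ^ (q + 1) := by rw [h1, one_mul, hf]
  have expand : ∀ x : L, (x + 1) ^ (q + 1) = x ^ (q + 1) + x ^ q + x + 1 := by
    intro x
    have h1 : (x + 1 : L) ^ q = x ^ q + 1 := by
      simpa using add_pow_char x 1 q
    calc (x + 1) ^ (q + 1) = (x + 1) ^ q * (x + 1) := pow_succ _ _
      _ = (x ^ q + 1) * (x + 1) := by rw [h1]
      _ = x ^ (q + 1) + x ^ q + x + 1 := by ring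
  have htr : ∀ v : L, g v + (g v) ^ q = v + v ^ q := by
    intro v
    have e := hgN (v + 1)
    rw [show g (v + 1) = g v + 1 by rw [gadd, hg1]] at e
    rw [expand (g v), expand v] at e
    linear_combination e - hgN v
  have hpt : ∀ v : L, g v = v ∨ g v = v ^ q := by
    intro v
    have hprod : (g v) * (g v) ^ q = v * v ^ q := by
      have h1 := hgN v
      rwa [pow_succ' (g v) q, pow_succ' v q] at h1
    have hzero : (v - g v) * (v - (g v) ^ q) = 0 := by
      linear_combination (-v) * htr v + hprod
    rcases mul_eq_zero.mp hzero with h | h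
    · left; exact (sub_eq_zero.mp h).symm
    · right
      have h2 : (g v) ^ q = v := (sub_eq_zero.mp h).symm
      calc g v = (g v) ^ (q ^ 2) := (hpowL _).symm
        _ = ((g v) ^ q) ^ q := by rw [← pow_mul, sq]
        _ = v ^ q := by rw [h2]
  have hdich : (∀ v : L, g v = v) ∨ (∀ v : L, g v = v ^ q) := by
    by_cases hid : ∀ v : L, g v = v
    · exact Or.inl hid
    · right
      push_neg at hid
      obtain ⟨a, ha⟩ := hid
      have hga : g a = a ^ q := (hpt a).resolve_left ha
      have haq : a ^ q ≠ a := fun h => ha (hga.trans h)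
      intro v
      rcases hpt v with hv | hv
      · by_cases hvq : v ^ q = v
        · rw [hv, hvq]
        · exfalso
          rcases hpt (a + v) with h | h
          · rw [gadd, hga, hv] at h
            exact haq (add_right_cancel h)
          · rw [gadd, hga, hv, add_pow_char a v q] at h
            exact hvq (add_left_cancel h).symm
      · exact hv
  have hfc : ∀ v : L, f v = c * g v := fun v => by
    rw [hg_def]
    field_simp
  obtain ⟨w, hw⟩ := aux_exists q hq L hL
  refine ⟨Units.mk0 c hc0, ⟨hc, ?_⟩, ?_⟩
  · rcases hdich with h | h
    · refine Or.inl ⟨fun v => by rw [hfc v, h v, Units.val_mk0], ?_⟩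
      intro hall
      have h1 : c * w = c * w ^ q := by
        have h2 := hall w; rw [hfc w, h w] at h2; exact h2
      exact hw (mul_left_cancel₀ hc0 h1).symm
    · refine Or.inr ⟨fun v => by rw [hfc v, h v, Units.val_mk0], ?_⟩
      intro hall
      have h1 : c * w ^ q = c * w := by
        have h2 := hall w; rw [hfc w, h w] at h2; exact h2
      exact hw (mul_left_cancel₀ hc0 h1)
  · rintro y ⟨hy1, hy2⟩
    have hyc : (y : L) = c := by
      rcases hy2 with ⟨h, _⟩ | ⟨h, _⟩
      · simpa using (h 1).symm
      · simpa using (h 1).symm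
    exact Units.ext hyc
end

section
/- Let q be an odd prime, K a finite field with q elements, and L a finite field with q^2 elements that is an algebra over K. The group of K-linear automorphisms f of L satisfying (f v)^(q+1) = v^(q+1) for all v ∈ L (a subgroup of the group of K-linear equivalences L ≃ₗ[K] L) is isomorphic to the dihedral group of order 2(q+1), i.e., to DihedralGroup (q+1). -/
/-- The group of `K`-linear automorphisms of `L` preserving the norm form `v ↦ v^(q+1)`,
as a subgroup of the group of `K`-linear automorphisms `L ≃ₗ[K] L`. -/
def normOrthogonalGroup (q : ℕ) (K L : Type*) [Field K] [Field L] [Algebra K L] :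
    Subgroup (L ≃ₗ[K] L) where
  carrier := {f : L ≃ₗ[K] L | ∀ v : L, (f v) ^ (q + 1) = v ^ (q + 1)}
  one_mem' := fun _ => rfl
  mul_mem' := by
    intro f g hf hg v
    have h : (f * g) v = f (g v) := rfl
    rw [h, hf, hg]
  inv_mem' := by
    intro f hf v
    have h : f (f⁻¹ v) = v := by
      have h1 : (f * f⁻¹) v = v := by rw [mul_inv_cancel]; rfl
      exact h1
    calc (f⁻¹ v) ^ (q + 1) = (f (f⁻¹ v)) ^ (q + 1) := (hf _).symm
      _ = v ^ (q + 1) := by rw [h]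

/-- Multiplication by a nonzero scalar, as a `K`-linear automorphism of `L`. -/
def mulLeftLinearEquiv {K L : Type*} [Field K] [Field L] [Algebra K L] (a : L) (ha : a ≠ 0) :
    L ≃ₗ[K] L where
  toFun v := a * v
  map_add' := mul_add a
  map_smul' c v := by simp [mul_smul_comm]
  invFun v := a⁻¹ * v
  left_inv v := by show a⁻¹ * (a * v) = v; rw [← mul_assoc, inv_mul_cancel₀ ha, one_mul]
  right_inv v := by show a * (a⁻¹ * v) = v; rw [← mul_assoc, mul_inv_cancel₀ ha, one_mul]

/-- The Frobenius `v ↦ v ^ q`, as a `K`-linear automorphism of `L`. -/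
def frobLinearEquiv (q : ℕ) {K L : Type*} [Field K] [Field L] [Algebra K L]
    [Fintype K] [Fintype L] [Fact q.Prime] [CharP L q]
    (hL : Fintype.card L = q ^ 2) (hK : Fintype.card K = q) : L ≃ₗ[K] L where
  toFun v := v ^ q
  map_add' x y := add_pow_char x y q
  map_smul' c v := by
    simp only [Algebra.smul_def, mul_pow, RingHom.id_apply]
    congr 1
    rw [← map_pow]
    congr 1
    conv_rhs => rw [← FiniteField.pow_card c, hK]
  invFun v := v ^ q
  left_inv v := by show (v ^ q) ^ q = v; rw [← pow_mul, ← sq, ← hL, FiniteField.pow_card]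
  right_inv v := by show (v ^ q) ^ q = v; rw [← pow_mul, ← sq, ← hL, FiniteField.pow_card]

/-- For an odd prime `q`, the group of `K`-linear automorphisms of `L`
preserving the norm form `v ↦ v^(q+1)` is isomorphic to the dihedral group of order
`2(q+1)`. -/
theorem normOrthogonalGroup_mulEquiv_dihedralGroup
    (q : ℕ) (hq : q.Prime) (hodd : Odd q)
    (L : Type*) [Field L] [Fintype L] (hL : Fintype.card L = q ^ 2)
    (K : Type*) [Field K] [Fintype K] (hK : Fintype.card K = q) [Algebra K L] :
    Nonempty (normOrthogonalGroup q K L ≃* DihedralGroup (q + 1)) := by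
  classical
  haveI : Fact q.Prime := ⟨hq⟩
  haveI : NeZero (q + 1) := ⟨by omega⟩
  have hq2 : 2 ≤ q := hq.two_le
  -- characteristic of L is q
  haveI hcharL : CharP L q := by
    obtain ⟨n, hpn, hcard⟩ := FiniteField.card L (ringChar L)
    have hdvd : ringChar L ∣ q ^ 2 := by
      rw [← hL, hcard]
      exact dvd_pow_self _ (by exact_mod_cast n.pos.ne')
    have : ringChar L = q :=
      (Nat.prime_dvd_prime_iff_eq hpn hq).mp (hpn.dvd_of_dvd_pow hdvd)
    exact this ▸ ringChar.charP L
  -- a generator of Lˣ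
  obtain ⟨g0, hg0⟩ := IsCyclic.exists_generator (α := Lˣ)
  have hcardU : Fintype.card Lˣ = q ^ 2 - 1 := by rw [Fintype.card_units, hL]
  have horder : orderOf g0 = q ^ 2 - 1 := by
    rw [orderOf_eq_card_of_forall_mem_zpowers hg0, Nat.card_eq_fintype_card, hcardU]
  have hfact : (q - 1) * (q + 1) = q ^ 2 - 1 := by
    obtain ⟨m, rfl⟩ : ∃ m, q = m + 2 := ⟨q - 2, by omega⟩
    have h1 : m + 2 - 1 = m + 1 := by omega
    have h2 : (m + 2) ^ 2 = (m + 1) * (m + 2 + 1) + 1 := by ring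
    rw [h1, h2, Nat.add_sub_cancel]
  -- the distinguished element ζ of order q+1
  set ζ : Lˣ := g0 ^ (q - 1) with hζdef
  have hζord : orderOf ζ = q + 1 := by
    rw [hζdef, orderOf_pow, horder, ← hfact,
      Nat.gcd_eq_right ⟨q + 1, rfl⟩, Nat.mul_div_cancel_left _ (by omega : 0 < q - 1)]
  have hζpow : ζ ^ (q + 1) = 1 := by rw [← hζord]; exact pow_orderOf_eq_one ζ
  set z : L := (ζ : L) with hzdef
  have hz : z ^ (q + 1) = 1 := by
    rw [hzdef, ← Units.val_pow_eq_pow_val, hζpow, Units.val_one]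
  have hzne : z ≠ 0 := Units.ne_zero ζ
  have hzord : orderOf z = q + 1 := by rw [hzdef, orderOf_units, hζord]
  -- every (q+1)-st root of unity is a power of z
  have hgen : ∀ a : L, a ≠ 0 → a ^ (q + 1) = 1 → ∃ t : ℕ, z ^ t = a := by
    intro a ha h1
    set au : Lˣ := Units.mk0 a ha with hau
    obtain ⟨m, hm⟩ := mem_powers_iff_mem_zpowers.2 (hg0 au)
    have hm' : g0 ^ m = au := hm
    have hau1 : au ^ (q + 1) = 1 := by
      ext
      rw [Units.val_pow_eq_pow_val, Units.val_one]
      exact h1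
    have hpow1 : g0 ^ (m * (q + 1)) = 1 := by rw [pow_mul, hm', hau1]
    have hdvd : (q - 1) * (q + 1) ∣ m * (q + 1) := by
      rw [hfact, ← horder]
      exact orderOf_dvd_of_pow_eq_one hpow1
    obtain ⟨t, ht⟩ := (Nat.mul_dvd_mul_iff_right (by omega : 0 < q + 1)).mp hdvd
    refine ⟨t, ?_⟩
    have : ζ ^ t = au := by rw [hζdef, ← pow_mul, ← ht, hm']
    rw [hzdef, ← Units.val_pow_eq_pow_val, this, hau]
    rfl
  -- an element not fixed by Frobenius
  have hvex : ∃ v : L, v ^ q ≠ v := by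
    refine ⟨(g0 : L), fun h => ?_⟩
    have h1 : g0 ^ q = g0 := by
      ext; rw [Units.val_pow_eq_pow_val]; exact h
    have h2 : g0 ^ (q - 1) * g0 = 1 * g0 := by
      rw [← pow_succ, one_mul]
      have : q - 1 + 1 = q := by omega
      rw [this, h1]
    have h3 : g0 ^ (q - 1) = 1 := mul_right_cancel h2
    have h4 := Nat.le_of_dvd (by omega) (horder ▸ orderOf_dvd_of_pow_eq_one h3)
    have h5 : q ^ 2 = q * q := sq q
    have h6 : q + 1 ≤ q * q := by nlinarith
    rw [h5] at h4
    generalize hQ : q * q = Q at h4 h6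
    omega
  obtain ⟨v0, hv0⟩ := hvex
  -- basics about powers of z with ZMod (q+1) exponents
  have key : ∀ n : ℕ, z ^ (n % (q + 1)) = z ^ n := fun n => (pow_eq_pow_mod n hz).symm
  set χ : ZMod (q + 1) → L := fun k => z ^ k.val with hχdef
  have hχadd : ∀ a b : ZMod (q + 1), χ (a + b) = χ a * χ b := by
    intro a b
    show z ^ _ = z ^ _ * z ^ _
    rw [ZMod.val_add, key, pow_add]
  have hχ0 : χ 0 = 1 := by show z ^ _ = 1; rw [ZMod.val_zero, pow_zero]
  have hχne : ∀ a, χ a ≠ 0 := fun a => pow_ne_zero _ hzne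
  have hχ1 : ∀ a, χ a ^ (q + 1) = 1 := by
    intro a
    show (z ^ ZMod.val a) ^ (q + 1) = 1
    rw [← pow_mul, mul_comm (ZMod.val a) (q + 1), pow_mul, hz, one_pow]
  have hχq : ∀ a : ZMod (q + 1), (χ a) ^ q = χ (-a) := by
    intro a
    have h1 : χ a ^ q * χ a = 1 := by
      show (z ^ a.val) ^ q * z ^ a.val = 1
      rw [← pow_mul, ← pow_add]
      have : a.val * q + a.val = (q + 1) * a.val := by ring
      rw [this, pow_mul, hz, one_pow]
    have h2 : χ (-a) * χ a = 1 := by rw [← hχadd, neg_add_cancel, hχ0]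
    exact mul_right_cancel₀ (hχne a) (h1.trans h2.symm)
  have hχinj : Function.Injective χ := by
    intro a b hab
    have h1 : a.val ≡ b.val [MOD q + 1] := by
      have hab' : z ^ a.val = z ^ b.val := hab
      have habu : ζ ^ a.val = ζ ^ b.val := by
        ext
        rw [Units.val_pow_eq_pow_val, Units.val_pow_eq_pow_val]
        exact hab'
      have := pow_eq_pow_iff_modEq.mp habu
      rwa [hζord] at this
    have h2 : a.val % (q + 1) = b.val % (q + 1) := h1
    rw [Nat.mod_eq_of_lt a.val_lt, Nat.mod_eq_of_lt b.val_lt] at h2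
    exact ZMod.val_injective _ h2
  have hχnat : ∀ t : ℕ, χ (t : ZMod (q + 1)) = z ^ t := by
    intro t
    show z ^ _ = _
    rw [ZMod.val_natCast, key]
  -- Frobenius squared is identity
  have hvqq : ∀ v : L, (v ^ q) ^ q = v := fun v => by
    rw [← pow_mul, ← sq, ← hL, FiniteField.pow_card]
  -- membership lemmas
  have hmemMul : ∀ (a : L) (ha : a ≠ 0), a ^ (q + 1) = 1 →
      mulLeftLinearEquiv (K := K) a ha ∈ normOrthogonalGroup q K L := by
    intro a ha h1 v
    show (a * v) ^ (q + 1) = v ^ (q + 1)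
    rw [mul_pow, h1, one_mul]
  set F : L ≃ₗ[K] L := frobLinearEquiv q hL hK with hFdef
  have hmemF : F ∈ normOrthogonalGroup q K L := by
    intro v
    show (v ^ q) ^ (q + 1) = v ^ (q + 1)
    calc (v ^ q) ^ (q + 1) = (v ^ q) ^ q * v ^ q := by rw [pow_succ]
      _ = v * v ^ q := by rw [hvqq]
      _ = v ^ (q + 1) := by rw [pow_succ, mul_comm]
  -- the candidate equivalence
  set e : DihedralGroup (q + 1) → normOrthogonalGroup q K L := fun x =>
    DihedralGroup.casesOn x
      (fun k => ⟨mulLeftLinearEquiv (χ (-k)) (hχne _), hmemMul _ _ (hχ1 _)⟩)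
      (fun k => ⟨mulLeftLinearEquiv (χ k) (hχne _) * F,
        Subgroup.mul_mem _ (hmemMul _ _ (hχ1 _)) hmemF⟩) with hedef
  have heR : ∀ (k : ZMod (q + 1)) (v : L),
      ((e (DihedralGroup.r k) : L ≃ₗ[K] L) v) = χ (-k) * v := fun k v => rfl
  have heSR : ∀ (k : ZMod (q + 1)) (v : L),
      ((e (DihedralGroup.sr k) : L ≃ₗ[K] L) v) = χ k * v ^ q := fun k v => rfl
  have hext : ∀ f g : normOrthogonalGroup q K L,
      (∀ v : L, (f : L ≃ₗ[K] L) v = (g : L ≃ₗ[K] L) v) → f = g :=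
    fun f g h => Subtype.ext (LinearEquiv.ext h)
  have happmul : ∀ (f g : normOrthogonalGroup q K L) (v : L),
      ((f * g : normOrthogonalGroup q K L) : L ≃ₗ[K] L) v
        = (f : L ≃ₗ[K] L) ((g : L ≃ₗ[K] L) v) := fun f g v => rfl
  -- multiplicativity
  have hmul : ∀ x y, e (x * y) = e x * e y := by
    rintro (i | i) (j | j) <;> apply hext <;> intro v
    · show ((e (DihedralGroup.r (i + j)) : L ≃ₗ[K] L)) v = _
      rw [happmul, heR, heR, heR, neg_add, hχadd]
      ring
    · show ((e (DihedralGroup.sr (j - i)) : L ≃ₗ[K] L)) v = _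
      rw [happmul, heSR, heR, heSR, sub_eq_add_neg, hχadd]
      ring
    · show ((e (DihedralGroup.sr (i + j)) : L ≃ₗ[K] L)) v = _
      rw [happmul, heSR, heSR, heR, mul_pow, hχq, neg_neg, hχadd]
      ring
    · show ((e (DihedralGroup.r (j - i)) : L ≃ₗ[K] L)) v = _
      rw [happmul, heR, heSR, heSR, mul_pow, hχq, hvqq, neg_sub, sub_eq_add_neg, hχadd]
      ring
  -- injectivity
  have hinj : Function.Injective e := by
    rintro (i | i) (j | j) h
    · have h1 := congrArg (fun f : normOrthogonalGroup q K L => (f : L ≃ₗ[K] L) 1) h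
      simp only [heR, mul_one] at h1
      have := neg_injective (hχinj h1)
      rw [this]
    · exfalso
      have h1 := congrArg (fun f : normOrthogonalGroup q K L => (f : L ≃ₗ[K] L) 1) h
      simp only [heR, heSR, mul_one, one_pow] at h1
      have h2 := congrArg (fun f : normOrthogonalGroup q K L => (f : L ≃ₗ[K] L) v0) h
      simp only [heR, heSR] at h2
      rw [← h1] at h2
      exact hv0 (mul_left_cancel₀ (hχne (-i)) h2.symm)
    · exfalso
      have h1 := congrArg (fun f : normOrthogonalGroup q K L => (f : L ≃ₗ[K] L) 1) h
      simp only [heR, heSR, mul_one, one_pow] at h1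
      have h2 := congrArg (fun f : normOrthogonalGroup q K L => (f : L ≃ₗ[K] L) v0) h
      simp only [heR, heSR] at h2
      rw [h1] at h2
      exact hv0 (mul_left_cancel₀ (hχne (-j)) h2)
    · have h1 := congrArg (fun f : normOrthogonalGroup q K L => (f : L ≃ₗ[K] L) 1) h
      simp only [heSR, one_pow, mul_one] at h1
      rw [hχinj h1]
  -- surjectivity
  have hsurj : Function.Surjective e := by
    rintro ⟨f, hf⟩
    have hf' : ∀ v : L, (f v) ^ (q + 1) = v ^ (q + 1) := hf
    set a : L := f 1 with hadef
    have ha1 : a ^ (q + 1) = 1 := by have := hf' 1; rwa [one_pow] at this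
    have hane : a ≠ 0 := by
      intro h
      rw [h, zero_pow (by omega : q + 1 ≠ 0)] at ha1
      exact zero_ne_one ha1
    set g : L → L := fun v => a⁻¹ * f v with hgdef
    have hgadd : ∀ x y, g (x + y) = g x + g y := by
      intro x y
      show a⁻¹ * f (x + y) = a⁻¹ * f x + a⁻¹ * f y
      rw [map_add, mul_add]
    have hg1 : g 1 = 1 := inv_mul_cancel₀ hane
    have hgnorm : ∀ v, (g v) ^ (q + 1) = v ^ (q + 1) := by
      intro v
      show (a⁻¹ * f v) ^ (q + 1) = v ^ (q + 1)
      rw [mul_pow, inv_pow, ha1, inv_one, one_mul, hf' v]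
    have hgtr : ∀ x, g x + (g x) ^ q = x + x ^ q := by
      intro x
      have expand : ∀ w : L, (w + 1) ^ (q + 1) = w ^ (q + 1) + (w + w ^ q) + 1 := by
        intro w
        rw [pow_succ, add_pow_char w 1 q, one_pow]
        ring
      have h1 := hgnorm (x + 1)
      rw [show g (x + 1) = g x + 1 by rw [hgadd, hg1], expand, expand] at h1
      have h2 := hgnorm x
      linear_combination h1 - h2
    have hgdich : ∀ x, g x = x ∨ g x = x ^ q := by
      intro x
      have h1 := hgtr x
      have h2 := hgnorm x
      have h3 : (g x - x) * (g x - x ^ q) = 0 := by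
        linear_combination g x * h1 - h2
      rcases mul_eq_zero.mp h3 with h | h
      · exact Or.inl (sub_eq_zero.mp h)
      · exact Or.inr (sub_eq_zero.mp h)
    have hfg : ∀ v, a * g v = f v := by
      intro v
      show a * (a⁻¹ * f v) = f v
      rw [← mul_assoc, mul_inv_cancel₀ hane, one_mul]
    have hglob : (∀ v, g v = v) ∨ (∀ v, g v = v ^ q) := by
      by_cases hc : ∀ v, g v = v
      · exact Or.inl hc
      · right
        push_neg at hc
        obtain ⟨x0, hx0⟩ := hc
        have hgx0 : g x0 = x0 ^ q := (hgdich x0).resolve_left hx0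
        have hx0q : x0 ^ q ≠ x0 := fun h => hx0 (hgx0.trans h)
        intro y
        rcases hgdich y with hy | hy
        · by_cases hyq : y ^ q = y
          · exact hy.trans hyq.symm
          · exfalso
            rcases hgdich (x0 + y) with h | h
            · rw [hgadd, hgx0, hy] at h
              exact hx0q (add_right_cancel h)
            · rw [hgadd, hgx0, hy, add_pow_char x0 y q] at h
              exact hyq (add_left_cancel h).symm
        · exact hy
    rcases hglob with hG | hG
    · obtain ⟨t, hzt⟩ := hgen a hane ha1
      refine ⟨DihedralGroup.r (-(t : ZMod (q + 1))), ?_⟩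
      apply hext
      intro v
      rw [heR, neg_neg, hχnat, hzt]
      show a * v = f v
      calc a * v = a * g v := by rw [hG v]
        _ = f v := hfg v
    · obtain ⟨t, hzt⟩ := hgen a hane ha1
      refine ⟨DihedralGroup.sr (t : ZMod (q + 1)), ?_⟩
      apply hext
      intro v
      rw [heSR, hχnat, hzt]
      show a * v ^ q = f v
      calc a * v ^ q = a * g v := by rw [hG v]
        _ = f v := hfg v
  exact ⟨(MulEquiv.mk' (Equiv.ofBijective e ⟨hinj, hsurj⟩) hmul).symm⟩
end

section
/- Let q be an odd prime, K a finite field with q elements, and L a finite field with q^2 elements that is an algebra over K. Define B : L × L → L by B(v,w) = (1/2)·((v+w)^(q+1) − v^(q+1) − w^(q+1)). Then B is a symmetric K-bilinear form on L (viewing L as a K-vector space) taking values in the image of the algebra map K → L, it satisfies B(v,v) = v^(q+1) for all v, and it is nondegenerate: if B(v,w) = 0 for all w ∈ L, then v = 0. -/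
/-- For an odd prime `q`, the polarization
`B(v,w) = (1/2)·((v+w)^(q+1) − v^(q+1) − w^(q+1))` of the norm form of `L/K` is a
symmetric `K`-bilinear form on `L` taking values in the image of `K`, with
`B(v,v) = v^(q+1)`, and it is nondegenerate. -/
theorem polarization_of_norm_symm_bilinear_nondegenerate
    (q : ℕ) (hq : q.Prime) (hodd : Odd q)
    (L : Type*) [Field L] [Fintype L] (hL : Fintype.card L = q ^ 2)
    (K : Type*) [Field K] [Fintype K] (hK : Fintype.card K = q) [Algebra K L] :
    ∀ B : L → L → L,
      (∀ v w : L, B v w = (2 : L)⁻¹ * ((v + w) ^ (q + 1) - v ^ (q + 1) - w ^ (q + 1))) →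
      ((∀ v w : L, B v w = B w v) ∧
       (∀ v₁ v₂ w : L, B (v₁ + v₂) w = B v₁ w + B v₂ w) ∧
       (∀ (a : K) (v w : L), B (a • v) w = a • B v w) ∧
       (∀ v w₁ w₂ : L, B v (w₁ + w₂) = B v w₁ + B v w₂) ∧
       (∀ (a : K) (v w : L), B v (a • w) = a • B v w) ∧
       (∀ v w : L, B v w ∈ Set.range (algebraMap K L)) ∧
       (∀ v : L, B v v = v ^ (q + 1)) ∧
       (∀ v : L, (∀ w : L, B v w = 0) → v = 0)) := by
  intro B hB
  haveI : Fact q.Prime := ⟨hq⟩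
  -- char L = q
  have hq0 : (q : L) = 0 := by
    have h := Nat.cast_card_eq_zero L
    rw [hL] at h
    push_cast at h
    exact pow_eq_zero_iff (by norm_num) |>.mp h
  have hring : ringChar L = q := by
    rcases (Nat.Prime.eq_one_or_self_of_dvd hq _ (ringChar.dvd hq0)) with h | h
    · exact absurd h (CharP.ringChar_ne_one)
    · exact h
  haveI hcharL : CharP L q := hring ▸ ringChar.charP L
  have hq2 : q ≠ 2 := by
    rintro rfl
    exact (by norm_num : ¬ Odd 2) hodd
  have h2 : (2 : L) ≠ 0 := Ring.two_ne_zero (by rw [hring]; exact hq2)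
  have frob : ∀ x y : L, (x + y) ^ q = x ^ q + y ^ q := fun x y => add_pow_char x y q
  have hKfix : ∀ a : K, (algebraMap K L a) ^ q = algebraMap K L a := by
    intro a
    rw [← map_pow, ← hK, FiniteField.pow_card]
  have hLfix : ∀ x : L, (x ^ q) ^ q = x := by
    intro x
    rw [← pow_mul, ← sq, ← hL, FiniteField.pow_card]
  have hB' : ∀ v w : L, B v w = (2 : L)⁻¹ * (v ^ q * w + w ^ q * v) := by
    intro v w
    rw [hB, pow_succ, pow_succ, pow_succ, frob]
    ring
  have h2fix : ((2 : L)⁻¹) ^ q = (2 : L)⁻¹ := by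
    have h2q : (2 : L) ^ q = 2 := by
      have := frob 1 1
      norm_num at this
      exact this
    rw [inv_pow, h2q]
  -- fixed points of Frobenius lie in the range of algebraMap
  have hfix : ∀ x : L, x ^ q = x → x ∈ Set.range (algebraMap K L) := by
    intro x hx
    classical
    set f : Polynomial L := Polynomial.X ^ q - Polynomial.X with hf
    have hdeg : f.natDegree = q := by
      rw [hf, Polynomial.natDegree_sub_eq_left_of_natDegree_lt, Polynomial.natDegree_X_pow]
      rw [Polynomial.natDegree_X_pow, Polynomial.natDegree_X]
      exact hq.one_lt
    have hfne : f ≠ 0 := by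
      intro h0
      rw [h0, Polynomial.natDegree_zero] at hdeg
      exact hq.pos.ne' hdeg.symm
    have hroot : ∀ y : L, y ^ q = y → y ∈ f.roots := by
      intro y hy
      rw [Polynomial.mem_roots hfne]
      simp [hf, Polynomial.IsRoot, hy]
    have hcard : Multiset.card f.roots ≤ q := by
      have := Polynomial.card_roots' f
      omega
    set S : Finset L := Finset.univ.image (algebraMap K L) with hS
    have hScard : S.card = q := by
      rw [hS, Finset.card_image_of_injective _ (algebraMap K L).injective,
        Finset.card_univ, hK]
    have hSsub : S ⊆ f.roots.toFinset := by
      intro y hy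
      rw [hS, Finset.mem_image] at hy
      obtain ⟨a, -, rfl⟩ := hy
      rw [Multiset.mem_toFinset]
      exact hroot _ (hKfix a)
    have hEq : S = f.roots.toFinset := by
      apply Finset.eq_of_subset_of_card_le hSsub
      calc f.roots.toFinset.card ≤ Multiset.card f.roots := Multiset.toFinset_card_le _
        _ ≤ q := hcard
        _ = S.card := hScard.symm
    have hxS : x ∈ S := by
      rw [hEq, Multiset.mem_toFinset]
      exact hroot x hx
    rw [hS, Finset.mem_image] at hxS
    obtain ⟨a, -, rfl⟩ := hxS
    exact ⟨a, rfl⟩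
  refine ⟨?_, ?_, ?_, ?_, ?_, ?_, ?_, ?_⟩
  · intro v w; rw [hB', hB']; ring
  · intro v₁ v₂ w; rw [hB', hB', hB', frob]; ring
  · intro a v w
    rw [hB', hB', Algebra.smul_def, Algebra.smul_def, mul_pow, hKfix]
    ring
  · intro v w₁ w₂; rw [hB', hB', hB', frob]; ring
  · intro a v w
    rw [hB', hB', Algebra.smul_def, Algebra.smul_def, mul_pow, hKfix]
    ring
  · intro v w
    apply hfix
    rw [hB', mul_pow, h2fix, frob, mul_pow, mul_pow, hLfix, hLfix]
    ring
  · intro v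
    rw [hB', pow_succ]
    field_simp
    ring
  · intro v hv
    have := hv v
    rw [hB'] at this
    have hvq : v ^ q * v = 0 := by
      have h2' : (2 : L)⁻¹ ≠ 0 := inv_ne_zero h2
      have : v ^ q * v + v ^ q * v = 0 := by
        have := mul_eq_zero.mp this
        rcases this with h | h
        · exact absurd h h2'
        · linear_combination h
      have h22 : (2 : L) * (v ^ q * v) = 0 := by linear_combination this
      rcases mul_eq_zero.mp h22 with h | h
      · exact absurd h h2
      · exact h
    rcases mul_eq_zero.mp hvq with h | h
    · exact pow_eq_zero_iff hq.pos.ne' |>.mp h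
    · exact h
end

section
/- Let q be an odd prime, K a finite field with q elements, and L a finite field with q^2 elements that is an algebra over K, and let B(v,w) = (1/2)·((v+w)^(q+1) − v^(q+1) − w^(q+1)). Let g be a K-linear automorphism of L with (g v)^(q+1) = v^(q+1) for all v. Define T : L × L → L × L by T(v,w) = ( (1/2)·((v + g v) + (w − g w)), (1/2)·((v − g v) + (w + g w)) ). Then T is a K-linear map satisfying B(T(v,w).1, T(v,w).2) = B(v,w) for all v,w ∈ L; moreover T(v,v) = (v,v) and T(v,−v) = (g v, −(g v)) for all v ∈ L. -/
/-- Let `q` be an odd prime and `g` a `K`-linear automorphism of `L`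
preserving the norm form. The map
`T(v,w) = ((1/2)((v+gv)+(w−gw)), (1/2)((v−gv)+(w+gw)))` on `L × L` is `K`-linear,
preserves the hyperbolic pairing `(v,w) ↦ B(v,w)` obtained from the polarization `B`
of the norm, fixes the diagonal pointwise, and acts as `g` on the antidiagonal. -/
theorem hyperbolic_embedding_of_norm_orthogonal
    (q : ℕ) (hq : q.Prime) (hodd : Odd q)
    (L : Type*) [Field L] [Fintype L] (hL : Fintype.card L = q ^ 2)
    (K : Type*) [Field K] [Fintype K] (hK : Fintype.card K = q) [Algebra K L]
    (g : L ≃ₗ[K] L) (hg : ∀ v : L, (g v) ^ (q + 1) = v ^ (q + 1)) :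
    ∀ (B : L → L → L) (T : L × L → L × L),
      (∀ v w : L, B v w = (2 : L)⁻¹ * ((v + w) ^ (q + 1) - v ^ (q + 1) - w ^ (q + 1))) →
      (∀ v w : L, T (v, w) =
        ((2 : L)⁻¹ * ((v + g v) + (w - g w)), (2 : L)⁻¹ * ((v - g v) + (w + g w)))) →
      (IsLinearMap K T ∧
       (∀ v w : L, B (T (v, w)).1 (T (v, w)).2 = B v w) ∧
       (∀ v : L, T (v, v) = (v, v)) ∧
       (∀ v : L, T (v, -v) = (g v, -(g v)))) := by
  intro B T hB hT
  -- characteristic of L is q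
  haveI hFact : Fact q.Prime := ⟨hq⟩
  obtain ⟨p, hp⟩ := CharP.exists L
  haveI := hp
  obtain ⟨n, hpprime, hcard⟩ := FiniteField.card L p
  have hpq : p = q := by
    have : q ∣ p ^ (n : ℕ) := by
      rw [← hcard, hL]
      exact dvd_pow_self q (by norm_num)
    have := (Nat.Prime.dvd_of_dvd_pow hq this)
    exact ((Nat.prime_dvd_prime_iff_eq hq hpprime).mp this).symm
  subst hpq
  -- 2 is invertible in L
  have h2 : (2 : L) ≠ 0 := by
    have : ((2 : ℕ) : L) ≠ 0 := by
      rw [Ne, CharP.cast_eq_zero_iff L p]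
      intro hdvd
      have hp2 : p = 2 := (Nat.prime_dvd_prime_iff_eq hq Nat.prime_two).mp hdvd
      rw [hp2] at hodd
      exact (Nat.not_odd_iff_even.mpr (by norm_num)) hodd
    simpa using this
  have h2' : (2 : L) * (2 : L)⁻¹ = 1 := mul_inv_cancel₀ h2
  -- Frobenius facts
  have hfrob : ∀ x y : L, (x + y) ^ p = x ^ p + y ^ p := fun x y => add_pow_char x y p
  have hfrobs : ∀ x y : L, (x - y) ^ p = x ^ p - y ^ p := fun x y => sub_pow_char x y
  have h2p : ((2 : L)⁻¹) ^ p = (2 : L)⁻¹ := by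
    rw [inv_pow]
    congr 1
    calc (2 : L) ^ p = (1 + 1 : L) ^ p := by norm_num
    _ = 1 + 1 := by rw [hfrob]; simp
    _ = 2 := by norm_num
  have hpow : ∀ x : L, x ^ (p + 1) = x ^ p * x := fun x => pow_succ x p
  -- simplified form of B
  have hB' : ∀ v w : L, B v w = (2 : L)⁻¹ * (v * w ^ p + w * v ^ p) := by
    intro v w
    rw [hB, hpow, hpow, hpow, hfrob]
    ring
  refine ⟨⟨?_, ?_⟩, ?_, ?_, ?_⟩
  · -- additivity
    intro x y
    have hx : x = (x.1, x.2) := rfl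
    have hy : y = (y.1, y.2) := rfl
    have hxy : x + y = (x.1 + y.1, x.2 + y.2) := rfl
    rw [hxy, hT, hx, hy, hT, hT, map_add, map_add, Prod.mk_add_mk, Prod.mk.injEq]
    constructor <;> ring
  · -- smul
    intro c x
    have hx : x = (x.1, x.2) := rfl
    have hxy : c • x = (c • x.1, c • x.2) := rfl
    rw [hxy, hT, hx, hT, map_smul, map_smul, Prod.smul_mk, Prod.mk.injEq]
    simp only [Algebra.smul_def]
    constructor <;> ring
  · -- preserves pairing
    intro v w
    rw [hT]
    simp only
    rw [hB', hB']
    -- relations from hg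
    have r1 : (g v) ^ p * (g v) = v ^ p * v := by
      have := hg v; rwa [hpow, hpow] at this
    have r2 : (g w) ^ p * (g w) = w ^ p * w := by
      have := hg w; rwa [hpow, hpow] at this
    have r3 : (g v + g w) ^ p * (g v + g w) = (v + w) ^ p * (v + w) := by
      have := hg (v + w); rw [hpow, hpow, map_add] at this; exact this
    rw [hfrob, hfrob] at r3
    -- expand frobenius of the transformed entries
    simp only [mul_pow, h2p, hfrob, hfrobs]
    linear_combination 2 * (2:L)⁻¹^3 * r3 - 4 * (2:L)⁻¹^3 * r1 - 4 * (2:L)⁻¹^3 * r2 +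
      ((2:L)⁻¹ * (2 * (2:L)⁻¹ + 1) * (v * w ^ p + w * v ^ p)) * h2'
  · -- diagonal
    intro v
    rw [hT, Prod.mk.injEq]
    exact ⟨by linear_combination v * h2', by linear_combination v * h2'⟩
  · -- antidiagonal
    intro v
    rw [hT, map_neg, Prod.mk.injEq]
    exact ⟨by linear_combination (g v) * h2', by linear_combination (-(g v)) * h2'⟩
end

section
/- Let q be an odd prime and L a finite field with q^2 elements. Suppose β ∈ L satisfies β^(q+1) = 1, β ≠ 1, and β ≠ −1. Then 1 + β⁻¹ ≠ 0, and the element λ = (1 + β)·(1 + β⁻¹)⁻¹ satisfies λ^q ≠ λ; in particular λ does not lie in the subfield of L with q elements. -/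
/-- Let `q` be an odd prime and `L` a finite field with `q^2` elements.
If `β ∈ L` satisfies `β^(q+1) = 1`, `β ≠ 1` and `β ≠ -1`, then `1 + β⁻¹ ≠ 0` and
`λ = (1+β)·(1+β⁻¹)⁻¹` satisfies `λ^q ≠ λ`, i.e. `λ` is not in the subfield with `q`
elements. -/
theorem lambda_not_in_prime_subfield
    (q : ℕ) (hq : q.Prime) (hodd : Odd q)
    (L : Type*) [Field L] [Fintype L] (hL : Fintype.card L = q ^ 2)
    (β : L) (h1 : β ^ (q + 1) = 1) (h2 : β ≠ 1) (h3 : β ≠ -1) :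
    1 + β⁻¹ ≠ 0 ∧
      ((1 + β) * (1 + β⁻¹)⁻¹) ^ q ≠ (1 + β) * (1 + β⁻¹)⁻¹ := by
  have hβ0 : β ≠ 0 := by
    rintro rfl
    simp [zero_pow, Nat.succ_ne_zero] at h1
  have hβ1 : 1 + β ≠ 0 := by
    intro h
    apply h3
    linear_combination h
  have hne : 1 + β⁻¹ ≠ 0 := by
    intro h
    apply hβ1
    have := congrArg (· * β) h
    field_simp at this
    linear_combination this
  refine ⟨hne, ?_⟩
  have hlam : (1 + β) * (1 + β⁻¹)⁻¹ = β := by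
    have : 1 + β⁻¹ = β⁻¹ * (1 + β) := by field_simp; ring
    rw [this, mul_inv, inv_inv, ← mul_assoc, mul_comm (1+β) β, mul_assoc,
      mul_inv_cancel₀ hβ1, mul_one]
  rw [hlam]
  have hβq : β ^ q = β⁻¹ := by
    have : β ^ (q + 1) = β ^ q * β := by ring
    rw [this] at h1
    field_simp
    linear_combination h1
  rw [hβq]
  intro h
  have hsq : β ^ 2 = 1 := by
    have h' := congrArg (· * β) h
    simp only [inv_mul_cancel₀ hβ0] at h'
    rw [sq, ← h']
  rcases sq_eq_one_iff.mp hsq with h | h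
  · exact h2 h
  · exact h3 h
end

section
/- Let n ≥ 1 and let H and H' be subgroups of the dihedral group DihedralGroup n. If H and H' have the same odd (finite) order, then H = H'. In particular, every cyclic subgroup of odd order of a dihedral group is uniquely determined by its order. -/
/-!
A subgroup of odd order contains no reflection, since reflections have order 2. So two such
subgroups lie in the rotation subgroup, which is cyclic; in a finite cyclic group the subgroup
of order `d` is the kernel of `x ↦ x ^ d`, hence determined by `d`.
-/

namespace IsCyclic

variable {G : Type*} [CommGroup G] [IsCyclic G] [Finite G]

theorem ker_powMonoidHom_natCard (K : Subgroup G) :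
    (powMonoidHom (Nat.card K) : G →* G).ker = K := by
  have hle : K ≤ (powMonoidHom (Nat.card K) : G →* G).ker := fun x hx =>
    orderOf_dvd_iff_pow_eq_one.mp (Subgroup.orderOf_dvd_natCard K hx)
  refine (Subgroup.eq_of_le_of_card_ge hle ?_).symm
  rw [card_powMonoidHom_ker, Nat.gcd_eq_right K.card_subgroup_dvd_card]

theorem subgroup_eq_of_card_eq {K K' : Subgroup G} (h : Nat.card K = Nat.card K') : K = K' := by
  rw [← ker_powMonoidHom_natCard K, ← ker_powMonoidHom_natCard K', h]

end IsCyclic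

theorem Subgroup.eq_of_card_eq_of_le_range {G N : Type*} [CommGroup G] [IsCyclic G] [Finite G]
    [Group N] {f : G →* N} (hf : Function.Injective f) {H H' : Subgroup N} (hH : H ≤ f.range)
    (hH' : H' ≤ f.range) (h : Nat.card H = Nat.card H') : H = H' := by
  have hcomap : H.comap f = H'.comap f := by
    apply IsCyclic.subgroup_eq_of_card_eq
    rwa [← card_map_of_injective hf, ← card_map_of_injective hf, map_comap_eq_self hH,
      map_comap_eq_self hH']
  rw [← map_comap_eq_self hH, ← map_comap_eq_self hH', hcomap]

namespace DihedralGroup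

variable {n : ℕ}

def rotation : Multiplicative (ZMod n) →* DihedralGroup n where
  toFun i := r i.toAdd
  map_one' := rfl
  map_mul' i j := (r_mul_r i.toAdd j.toAdd).symm

theorem rotation_injective : Function.Injective (rotation (n := n)) :=
  fun _ _ h => r.inj h

theorem le_range_rotation_of_odd_card {H : Subgroup (DihedralGroup n)} (hH : Odd (Nat.card H)) :
    H ≤ rotation.range := by
  rintro (i | i) hi
  · exact ⟨.ofAdd i, rfl⟩
  · have h2 : 2 ∣ Nat.card H := orderOf_sr i ▸ Subgroup.orderOf_dvd_natCard H hi
    exact absurd (even_iff_two_dvd.mpr h2) (Nat.not_even_iff_odd.mpr hH)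

end DihedralGroup

/-- Two subgroups of a dihedral group `DihedralGroup n` (`n ≥ 1`) with the
same odd order coincide; in particular, every cyclic subgroup of odd order of a dihedral
group is uniquely determined by its order. -/
theorem dihedral_subgroups_of_same_odd_order_eq
    (n : ℕ) (hn : 1 ≤ n) (H H' : Subgroup (DihedralGroup n))
    (hcard : Nat.card H = Nat.card H') (hodd : Odd (Nat.card H)) :
    H = H' := by
  have : NeZero n := NeZero.of_pos hn
  exact Subgroup.eq_of_card_eq_of_le_range DihedralGroup.rotation_injective
    (DihedralGroup.le_range_rotation_of_odd_card hodd)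
    (DihedralGroup.le_range_rotation_of_odd_card (hcard ▸ hodd)) hcard
end
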